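/- arXiv:1411.3412 — 2 statements merged into one kernel-verified Lean document; each statement's English description precedes it below -/
import Mathlib

section
/- If tanh(d) = cosh(r)·tanh(w) with w, r ≥ 0 and sinh(r)·sinh(w) < 1, then sinh(d) = cosh(r)·sinh(w)/√(1 - sinh²(r)·sinh²(w)). -/
/-- if `tanh d = cosh r · tanh w` with `d, r, w ≥ 0` and
`sinh r · sinh w < 1`, then `sinh d = cosh r · sinh w / √(1 - sinh²r · sinh²w)`. -/
theorem stmt_9 (d r w : ℝ) (hd : 0 ≤ d) (hr : 0 ≤ r) (hw : 0 ≤ w)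
    (hsw : Real.sinh r * Real.sinh w < 1)
    (h : Real.tanh d = Real.cosh r * Real.tanh w) :
    Real.sinh d =
      Real.cosh r * Real.sinh w / Real.sqrt (1 - Real.sinh r ^ 2 * Real.sinh w ^ 2) := by
  have hsr : 0 ≤ Real.sinh r := by rw [← Real.sinh_zero]; exact Real.sinh_le_sinh.2 hr
  have hsww : 0 ≤ Real.sinh w := by rw [← Real.sinh_zero]; exact Real.sinh_le_sinh.2 hw
  have hsd : 0 ≤ Real.sinh d := by rw [← Real.sinh_zero]; exact Real.sinh_le_sinh.2 hd
  have hS : 0 < 1 - Real.sinh r ^ 2 * Real.sinh w ^ 2 := by nlinarith [mul_nonneg hsr hsww]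
  have hcd : 0 < Real.cosh d := Real.cosh_pos d
  have hcw : 0 < Real.cosh w := Real.cosh_pos w
  have hcr : 0 < Real.cosh r := Real.cosh_pos r
  have hcross : Real.sinh d * Real.cosh w = Real.cosh r * Real.sinh w * Real.cosh d := by
    have := h
    rw [Real.tanh_eq_sinh_div_cosh, Real.tanh_eq_sinh_div_cosh] at this
    field_simp at this
    linarith
  have hd2 : Real.cosh d ^ 2 = 1 + Real.sinh d ^ 2 := by
    have := Real.cosh_sq_sub_sinh_sq d; nlinarith
  have hw2 : Real.cosh w ^ 2 = 1 + Real.sinh w ^ 2 := by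
    have := Real.cosh_sq_sub_sinh_sq w; nlinarith
  have hr2 : Real.cosh r ^ 2 = 1 + Real.sinh r ^ 2 := by
    have := Real.cosh_sq_sub_sinh_sq r; nlinarith
  have key : Real.sinh d ^ 2 = (Real.cosh r * Real.sinh w) ^ 2 /
      (1 - Real.sinh r ^ 2 * Real.sinh w ^ 2) := by
    rw [eq_div_iff hS.ne']
    have hsq := congrArg (· ^ 2) hcross
    simp only [mul_pow] at hsq
    linear_combination hsq - Real.sinh d ^ 2 * hw2 +
      Real.cosh r ^ 2 * Real.sinh w ^ 2 * hd2 + Real.sinh d ^ 2 * Real.sinh w ^ 2 * hr2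
  have : Real.sinh d = Real.sqrt (Real.sinh d ^ 2) := (Real.sqrt_sq hsd).symm
  rw [this, key, Real.sqrt_div (sq_nonneg _),
    Real.sqrt_sq (mul_nonneg hcr.le hsww)]
end

section
/- Let g = e^{2f}|dz|² be a smooth conformal metric on the unit disc D whose Gaussian curvature satisfies K_g < -ε² < 0 everywhere. Then e^{2f(z)} < 4/(ε²(1-|z|²)²) for all z ∈ D. -/
/-- The Euclidean Laplacian `Δ₀ f = f_xx + f_yy` of `f : ℂ → ℝ`. -/
noncomputable def euclLap (f : ℂ → ℝ) (z : ℂ) : ℝ :=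
  fderiv ℝ (fun w => fderiv ℝ f w 1) z 1 +
  fderiv ℝ (fun w => fderiv ℝ f w Complex.I) z Complex.I

/-!
At an interior maximum of `e^{2f} (r² - |w|²)²` on the disc of radius `r`, the Laplacian of
`f + log (r² - |w|²)` is nonpositive, i.e. `Δf ≤ 4r² / (r² - |w|²)²`; combined with
`Δf > ε² e^{2f}` this bounds the maximum, hence the value at any given point, by `4r² / ε²`.
Letting `r → 1` gives the non-strict inequality on the unit disc, and equality at a point would
make that point an interior maximum for `r = 1`, where the same argument is strict.
-/

open Filter Topology Metric Real InnerProductSpace Laplacian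
open scoped RealInnerProductSpace

theorem IsLocalMax.deriv_deriv_nonpos {h : ℝ → ℝ} {a : ℝ} (hmax : IsLocalMax h a)
    (hc : ContinuousAt h a) : deriv (deriv h) a ≤ 0 := by
  by_contra! hpos
  -- the second derivative test would make `a` also a local minimum, so `h` is locally constant
  have hmin := isLocalMin_of_deriv_deriv_pos hpos hmax.deriv_eq_zero hc
  have hconst : h =ᶠ[𝓝 a] fun _ => h a := by
    filter_upwards [hmin, hmax] with x h₁ h₂ using le_antisymm h₂ h₁
  simp [hconst.deriv.deriv_eq] at hpos

section Hessian

variable {E : Type*} [NormedAddCommGroup E] [NormedSpace ℝ E] {u : E → ℝ} {z : E}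

theorem ContDiffAt.differentiableAt_fderiv (hu : ContDiffAt ℝ 2 u z) :
    DifferentiableAt ℝ (fderiv ℝ u) z :=
  (hu.fderiv_right (m := 1) (by norm_num)).differentiableAt (by norm_num)

theorem ContDiffAt.deriv_deriv_comp_line (hu : ContDiffAt ℝ 2 u z) (v : E) :
    deriv (deriv fun t : ℝ => u (z + t • v)) 0 = fderiv ℝ (fderiv ℝ u) z v v := by
  have hline (t : ℝ) : HasDerivAt (fun t : ℝ => z + t • v) v t := by
    simpa using ((hasDerivAt_id t).smul_const v).const_add z
  have hnear : ∀ᶠ t : ℝ in 𝓝 0, DifferentiableAt ℝ u (z + t • v) := by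
    have hto : Tendsto (fun t : ℝ => z + t • v) (𝓝 0) (𝓝 z) := by
      simpa using (hline 0).continuousAt.tendsto
    filter_upwards [hto.eventually (hu.eventually (by simp))] with t ht
    exact ht.differentiableAt (by norm_num)
  have hderiv : deriv (fun t : ℝ => u (z + t • v)) =ᶠ[𝓝 0]
      fun t : ℝ => fderiv ℝ u (z + t • v) v := by
    filter_upwards [hnear] with t ht
    exact (ht.hasFDerivAt.comp_hasDerivAt t (hline t)).deriv
  have hF : HasFDerivAt (fderiv ℝ u) (fderiv ℝ (fderiv ℝ u) z) (z + (0 : ℝ) • v) := by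
    rw [zero_smul, add_zero]
    exact hu.differentiableAt_fderiv.hasFDerivAt
  rw [hderiv.deriv_eq]
  exact ((ContinuousLinearMap.apply ℝ ℝ v).hasFDerivAt.comp_hasDerivAt (0 : ℝ)
    (hF.comp_hasDerivAt (0 : ℝ) (hline 0))).deriv

theorem IsLocalMax.fderiv_fderiv_apply_self_nonpos (hmax : IsLocalMax u z)
    (hu : ContDiffAt ℝ 2 u z) (v : E) : fderiv ℝ (fderiv ℝ u) z v v ≤ 0 := by
  have hline : Continuous fun t : ℝ => z + t • v := by fun_prop
  have hto : Tendsto (fun t : ℝ => z + t • v) (𝓝 0) (𝓝 z) := hline.tendsto' 0 z (by simp)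
  rw [← hu.deriv_deriv_comp_line v]
  refine IsLocalMax.deriv_deriv_nonpos ?_ ?_
  · simpa [IsLocalMax, IsMaxFilter] using hto.eventually hmax
  · exact hu.continuousAt.comp_of_eq hline.continuousAt (by simp)

end Hessian

theorem IsLocalMax.laplacian_nonpos {E : Type*} [NormedAddCommGroup E] [InnerProductSpace ℝ E]
    [FiniteDimensional ℝ E] {u : E → ℝ} {z : E} (hmax : IsLocalMax u z)
    (hu : ContDiffAt ℝ 2 u z) : Δ u z ≤ 0 := by
  rw [laplacian_eq_iteratedFDeriv_stdOrthonormalBasis]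
  exact Finset.sum_nonpos fun i _ => by
    simpa [iteratedFDeriv_two_apply] using hmax.fderiv_fderiv_apply_self_nonpos hu _

section LogPotential

variable {E : Type*} [NormedAddCommGroup E] [InnerProductSpace ℝ E] {c : ℝ} {z : E}

theorem hasFDerivAt_log_sub_norm_sq (hz : ‖z‖ ^ 2 < c) :
    HasFDerivAt (fun w : E => log (c - ‖w‖ ^ 2)) ((-2 / (c - ‖z‖ ^ 2)) • innerSL ℝ z) z := by
  convert ((hasStrictFDerivAt_norm_sq z).hasFDerivAt.const_sub c).log (sub_pos.2 hz).ne'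
    using 1
  ext v
  simp only [smul_apply, coe_innerSL_apply, smul_eq_mul, smul_neg,
    neg_apply, nsmul_eq_mul, Nat.cast_ofNat]
  ring

theorem fderiv_fderiv_log_sub_norm_sq_apply (hz : ‖z‖ ^ 2 < c) (v : E) :
    fderiv ℝ (fderiv ℝ fun w : E => log (c - ‖w‖ ^ 2)) z v v
      = -2 * ‖v‖ ^ 2 / (c - ‖z‖ ^ 2) - 4 * ⟪z, v⟫ ^ 2 / (c - ‖z‖ ^ 2) ^ 2 := by
  have hD : c - ‖z‖ ^ 2 ≠ 0 := (sub_pos.2 hz).ne'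
  have hfd : fderiv ℝ (fun w : E => log (c - ‖w‖ ^ 2)) =ᶠ[𝓝 z]
      fun w => (-2 / (c - ‖w‖ ^ 2)) • innerSL ℝ w := by
    have hopen : IsOpen {w : E | ‖w‖ ^ 2 < c} := isOpen_lt (by fun_prop) continuous_const
    filter_upwards [hopen.mem_nhds hz] with w hw
    exact (hasFDerivAt_log_sub_norm_sq hw).fderiv
  have hg : HasFDerivAt (fun w : E => -2 / (c - ‖w‖ ^ 2))
      ((-4 / (c - ‖z‖ ^ 2) ^ 2) • innerSL ℝ z) z := by
    have hinv := ((hasDerivAt_inv hD).comp_hasFDerivAt z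
      ((hasStrictFDerivAt_norm_sq z).hasFDerivAt.const_sub c)).const_mul (-2)
    refine (hinv.congr_fderiv ?_).congr_of_eventuallyEq (.of_forall fun w => ?_)
    · ext v
      simp only [smul_neg, neg_smul, neg_neg, neg_apply,
        smul_apply, coe_innerSL_apply, nsmul_eq_mul, Nat.cast_ofNat, smul_eq_mul]
      field_simp
      ring
    · simp [div_eq_mul_inv]
  rw [((hg.smul (innerSL ℝ).hasFDerivAt).congr_of_eventuallyEq hfd).fderiv]
  -- `innerSL ℝ` enters here through its real-linear coercion, which `simp` does not see through
  change -2 / (c - ‖z‖ ^ 2) * ⟪v, v⟫ + -4 / (c - ‖z‖ ^ 2) ^ 2 * ⟪z, v⟫ * ⟪z, v⟫ = _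
  rw [real_inner_self_eq_norm_sq]
  field_simp
  ring

theorem contDiffAt_log_sub_norm_sq (hz : ‖z‖ ^ 2 < c) :
    ContDiffAt ℝ 2 (fun w : E => log (c - ‖w‖ ^ 2)) z :=
  (contDiffAt_const.sub (contDiff_norm_sq ℝ).contDiffAt).log (sub_pos.2 hz).ne'

theorem laplacian_log_sub_norm_sq [FiniteDimensional ℝ E] (hz : ‖z‖ ^ 2 < c) :
    Δ (fun w : E => log (c - ‖w‖ ^ 2)) z
      = -2 * Module.finrank ℝ E / (c - ‖z‖ ^ 2) - 4 * ‖z‖ ^ 2 / (c - ‖z‖ ^ 2) ^ 2 := by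
  simp only [laplacian_eq_iteratedFDeriv_stdOrthonormalBasis, iteratedFDeriv_two_apply,
    Matrix.cons_val_zero, Matrix.cons_val_one, fderiv_fderiv_log_sub_norm_sq_apply hz,
    OrthonormalBasis.norm_eq_one, one_pow, mul_one, Finset.sum_sub_distrib, Finset.sum_const,
    Finset.card_univ, Fintype.card_fin, nsmul_eq_mul, ← Finset.sum_div, ← Finset.mul_sum,
    (stdOrthonormalBasis ℝ E).sum_sq_inner_left]
  ring

end LogPotential

theorem euclLap_eq_laplacian {f : ℂ → ℝ} {z : ℂ} (hf : ContDiffAt ℝ 2 f z) :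
    euclLap f z = Δ f z := by
  have happly (v : ℂ) :
      fderiv ℝ (fun w => fderiv ℝ f w v) z v = fderiv ℝ (fderiv ℝ f) z v v :=
    congrArg (· v) ((ContinuousLinearMap.apply ℝ ℝ v).hasFDerivAt.comp z
      hf.differentiableAt_fderiv.hasFDerivAt).fderiv
  simp [euclLap, laplacian_eq_iteratedFDeriv_complexPlane, iteratedFDeriv_two_apply, happly]

/-- `4c` times the ratio of `e^{2f} |dw|²` to the metric `4c / (c - |w|²)² |dw|²` of curvature
`-1` on the disc of radius `√c`. -/
noncomputable def hypRatio (f : ℂ → ℝ) (c : ℝ) (w : ℂ) : ℝ :=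
  exp (2 * f w) * (c - ‖w‖ ^ 2) ^ 2

section HypRatio

variable {f : ℂ → ℝ} {c ε : ℝ} {z : ℂ}

theorem hypRatio_pos (hz : ‖z‖ ^ 2 < c) : 0 < hypRatio f c z := by
  have := sub_pos.2 hz
  unfold hypRatio
  positivity

theorem log_hypRatio (hz : ‖z‖ ^ 2 < c) :
    log (hypRatio f c z) = 2 * (f z + log (c - ‖z‖ ^ 2)) := by
  rw [hypRatio, log_mul (exp_ne_zero _) (pow_ne_zero 2 (sub_pos.2 hz).ne'), log_exp, log_pow]
  push_cast
  ring

theorem IsLocalMax.add_log_of_hypRatio (hmax : IsLocalMax (hypRatio f c) z)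
    (hz : ‖z‖ ^ 2 < c) : IsLocalMax (f + fun w => log (c - ‖w‖ ^ 2)) z := by
  have hnhds : {w : ℂ | ‖w‖ ^ 2 < c} ∈ 𝓝 z :=
    (isOpen_lt (by fun_prop) continuous_const).mem_nhds hz
  filter_upwards [hmax, hnhds] with w hw hwc
  have := log_le_log (hypRatio_pos hwc) hw
  rw [log_hypRatio hwc, log_hypRatio hz] at this
  simp only [Pi.add_apply]
  linarith

theorem sq_mul_hypRatio_lt_of_isLocalMax (hf : ContDiffAt ℝ 2 f z)
    (hK : ε ^ 2 * exp (2 * f z) < Δ f z) (hz : ‖z‖ ^ 2 < c)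
    (hmax : IsLocalMax (hypRatio f c) z) : ε ^ 2 * hypRatio f c z < 4 * c := by
  have hD := sub_pos.2 hz
  have hlog := contDiffAt_log_sub_norm_sq hz
  have hΔ := (hmax.add_log_of_hypRatio hz).laplacian_nonpos (hf.add hlog)
  rw [hf.laplacian_add hlog, laplacian_log_sub_norm_sq hz, Complex.finrank_real_complex] at hΔ
  have hΔf : Δ f z * (c - ‖z‖ ^ 2) ^ 2 ≤ 4 * c := by
    field_simp at hΔ
    push_cast at hΔ
    linarith
  calc ε ^ 2 * hypRatio f c z = ε ^ 2 * exp (2 * f z) * (c - ‖z‖ ^ 2) ^ 2 := by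
        rw [hypRatio, mul_assoc]
    _ < Δ f z * (c - ‖z‖ ^ 2) ^ 2 := by gcongr
    _ ≤ 4 * c := hΔf

theorem exists_mem_ball_isMaxOn_hypRatio {r : ℝ} (hr : 0 < r)
    (hf : ContinuousOn f (closedBall 0 r)) :
    ∃ w ∈ ball (0 : ℂ) r, IsMaxOn (hypRatio f (r ^ 2)) (closedBall 0 r) w := by
  obtain ⟨w, hw, hmax⟩ := (isCompact_closedBall (0 : ℂ) r).exists_isMaxOn
    (nonempty_closedBall.2 hr.le) (show ContinuousOn (hypRatio f (r ^ 2)) _ by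
      unfold hypRatio; fun_prop)
  refine ⟨w, mem_ball_zero_iff.2 ((mem_closedBall_zero_iff.1 hw).lt_of_ne fun hwr => ?_), hmax⟩
  -- `hypRatio` vanishes on the boundary circle but not at the centre
  have hzero : hypRatio f (r ^ 2) w = 0 := by simp [hypRatio, hwr]
  have hcentre : hypRatio f (r ^ 2) 0 ≤ hypRatio f (r ^ 2) w := hmax (mem_closedBall_self hr.le)
  have := hypRatio_pos (f := f) (show ‖(0 : ℂ)‖ ^ 2 < r ^ 2 by simpa using pow_pos hr 2)
  linarith

variable (hf : ContDiffOn ℝ 2 f (ball 0 1)) (hK : ∀ z ∈ ball (0 : ℂ) 1,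
  ε ^ 2 * exp (2 * f z) < Δ f z)
include hf hK

theorem sq_mul_hypRatio_lt_sq_of_norm_lt {r : ℝ} (hz : ‖z‖ < r) (hr : r < 1) :
    ε ^ 2 * hypRatio f (r ^ 2) z < 4 * r ^ 2 := by
  obtain ⟨w, hw, hmax⟩ := exists_mem_ball_isMaxOn_hypRatio ((norm_nonneg z).trans_lt hz)
    (hf.continuousOn.mono (closedBall_subset_ball hr))
  have hw1 : w ∈ ball (0 : ℂ) 1 := ball_subset_ball hr.le hw
  have hwr : ‖w‖ ^ 2 < r ^ 2 := by
    gcongr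
    exact mem_ball_zero_iff.1 hw
  calc ε ^ 2 * hypRatio f (r ^ 2) z ≤ ε ^ 2 * hypRatio f (r ^ 2) w := by
        gcongr
        exact hmax (mem_closedBall_zero_iff.2 hz.le)
    _ < 4 * r ^ 2 := sq_mul_hypRatio_lt_of_isLocalMax (hf.contDiffAt (isOpen_ball.mem_nhds hw1))
        (hK w hw1) hwr (hmax.isLocalMax (closedBall_mem_nhds_of_mem hw))

theorem sq_mul_hypRatio_one_le (hz : z ∈ ball (0 : ℂ) 1) : ε ^ 2 * hypRatio f 1 z ≤ 4 := by
  have hcont : Continuous fun r : ℝ => 4 * r ^ 2 - ε ^ 2 * hypRatio f (r ^ 2) z := by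
    unfold hypRatio
    fun_prop
  have hlim := (hcont.tendsto 1).mono_left (nhdsWithin_le_nhds (s := Set.Iio 1))
  have hpos : ∀ᶠ r in 𝓝[<] (1 : ℝ), 0 ≤ 4 * r ^ 2 - ε ^ 2 * hypRatio f (r ^ 2) z := by
    filter_upwards [Ioo_mem_nhdsLT (mem_ball_zero_iff.1 hz)] with r hr
    linarith [sq_mul_hypRatio_lt_sq_of_norm_lt hf hK hr.1 hr.2]
  simpa using ge_of_tendsto hlim hpos

theorem sq_mul_hypRatio_one_lt (hε : ε ≠ 0) (hz : z ∈ ball (0 : ℂ) 1) :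
    ε ^ 2 * hypRatio f 1 z < 4 := by
  refine (sq_mul_hypRatio_one_le hf hK hz).lt_of_ne fun heq => ?_
  have hmax : IsLocalMax (hypRatio f 1) z := by
    filter_upwards [isOpen_ball.mem_nhds hz] with w hw
    refine le_of_mul_le_mul_left ?_ (by positivity : 0 < ε ^ 2)
    rw [heq]
    exact sq_mul_hypRatio_one_le hf hK hw
  have := sq_mul_hypRatio_lt_of_isLocalMax (hf.contDiffAt (isOpen_ball.mem_nhds hz)) (hK z hz)
    (by simpa using mem_ball_zero_iff.1 hz) hmax
  linarith

end HypRatio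

/-- Ahlfors–Schwarz lemma: let `g = e^{2f}|dz|²` be a smooth
conformal metric on the unit disc whose Gaussian curvature
`K_g = -e^{-2f}Δ₀f` satisfies `K_g < -ε² < 0`.  Then
`e^{2f(z)} < 4/(ε²(1-|z|²)²)` for all `z` in the disc. -/
theorem stmt_13 (f : ℂ → ℝ) (ε : ℝ) (hε : 0 < ε)
    (hf : ContDiffOn ℝ 2 f (Metric.ball 0 1))
    (hK : ∀ z ∈ Metric.ball (0 : ℂ) 1,
      -Real.exp (-(2 * f z)) * euclLap f z < -ε ^ 2) :
    ∀ z ∈ Metric.ball (0 : ℂ) 1,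
      Real.exp (2 * f z) < 4 / (ε ^ 2 * (1 - ‖z‖ ^ 2) ^ 2) := by
  have hK' : ∀ z ∈ ball (0 : ℂ) 1, ε ^ 2 * exp (2 * f z) < Δ f z := fun z hz => by
    rw [← euclLap_eq_laplacian (hf.contDiffAt (isOpen_ball.mem_nhds hz))]
    have hcurv : ε ^ 2 < exp (-(2 * f z)) * euclLap f z := by linarith [hK z hz]
    calc ε ^ 2 * exp (2 * f z) < exp (-(2 * f z)) * euclLap f z * exp (2 * f z) := by gcongr
      _ = euclLap f z := by rw [mul_right_comm, ← exp_add, neg_add_cancel, exp_zero, one_mul]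
  intro z hz
  have hD : 0 < 1 - ‖z‖ ^ 2 := sub_pos.2 (by simpa using mem_ball_zero_iff.1 hz)
  have h := sq_mul_hypRatio_one_lt hf hK' hε.ne' hz
  rw [lt_div_iff₀ (by positivity)]
  calc exp (2 * f z) * (ε ^ 2 * (1 - ‖z‖ ^ 2) ^ 2) = ε ^ 2 * hypRatio f 1 z := by
        rw [hypRatio]; ring
    _ < 4 := h
end
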